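/- arXiv:1708.00721 — 2 statements merged into one kernel-verified Lean document; each statement's English description precedes it below -/
import Mathlib

section
/- In the two-handle construction, the map ω ↦ B_ω is a bijection from Ω onto ℬ, each B_ω is a block for H acting on 𝒰, and B_{ω^{π(g)}} = B_ω^{φ(g)} for all ω ∈ Ω and g ∈ Δ(p,q,r); hence the induced action of H on ℬ is equivalent to the action of π(Δ(p,q,r)) on Ω, and (when |Ω| > 1) H acts imprimitively on 𝒰 with block system ℬ. -/
open Equiv Pointwise

def triRels (p q r : ℕ) : Set (FreeGroup (Fin 2)) :=
  {FreeGroup.of 0 ^ p, FreeGroup.of 1 ^ q, (FreeGroup.of 0 * FreeGroup.of 1) ^ r}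

/-- The triangle group `Δ(p,q,r) = ⟨x, y ∣ x^p = y^q = (xy)^r = 1⟩. -/
abbrev Tri (p q r : ℕ) := PresentedGroup (triRels p q r)

/-- The generator `x` of the triangle group. -/
def gx (p q r : ℕ) : Tri p q r := PresentedGroup.of 0

/-- The generator `y` of the triangle group. -/
def gy (p q r : ℕ) : Tri p q r := PresentedGroup.of 1

/-- A permutation of `Ω` acting simultaneously on every copy `{i} × Ω`;
this models `π_1(g)π_2(g)⋯π_m(g)` on the disjoint union `𝒰` of the copies. -/
def prodCongrHom (ι Ω : Type) : Equiv.Perm Ω →* Equiv.Perm (ι × Ω) where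
  toFun σ := Equiv.prodCongr (Equiv.refl ι) σ
  map_one' := Equiv.ext fun z => by cases z; rfl
  map_mul' σ τ := Equiv.ext fun z => by cases z; rfl

/-- The identification of `Fin m` with the fibre `{(j, e) : j ∈ Fin m}`,
sending `j` to the copy `e_j = (j, e)` of the point `e`. -/
def fib (m : ℕ) (Ω : Type) [DecidableEq Ω] (e : Ω) :
    Fin m ≃ {z : Fin m × Ω // z.2 = e} where
  toFun j := ⟨(j, e), rfl⟩
  invFun z := z.1.1
  left_inv j := rfl
  right_inv z := by
    obtain ⟨⟨j, e'⟩, hz⟩ := z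
    subst hz
    rfl

/-- `φ_x = π_1(x)⋯π_m(x) ∘ γ_1⋯γ_k ∘ δ_1⋯δ_l` on `𝒰 = Fin m × Fin deg`: the product
`γ_1⋯γ_k` acts on the copies of `a` as `α` and on the copies of `b` as `α⁻¹`, and the
product `δ_1⋯δ_l` acts on the copies of `c` as `β` and on the copies of `d` as `β⁻¹`. -/
def phiX2h (p q r deg m : ℕ) (π : Tri p q r →* Equiv.Perm (Fin deg))
    (α β : Equiv.Perm (Fin m)) (a b c d : Fin deg) : Equiv.Perm (Fin m × Fin deg) :=
  prodCongrHom (Fin m) (Fin deg) (π (gx p q r)) *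
    Equiv.Perm.extendDomain α (fib m (Fin deg) a) *
    Equiv.Perm.extendDomain α⁻¹ (fib m (Fin deg) b) *
    Equiv.Perm.extendDomain β (fib m (Fin deg) c) *
    Equiv.Perm.extendDomain β⁻¹ (fib m (Fin deg) d)

/-- `φ_y = π_1(y)⋯π_m(y)` on `𝒰 = Fin m × Fin deg`. -/
def phiY2h (p q r deg m : ℕ) (π : Tri p q r →* Equiv.Perm (Fin deg)) :
    Equiv.Perm (Fin m × Fin deg) :=
  prodCongrHom (Fin m) (Fin deg) (π (gy p q r))

/-- The block `B_ω = {ω, deg + ω, …, (m-1)deg + ω}`, i.e. the set of all copies of `ω`. -/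
def Bset (m : ℕ) {Ω : Type} (ω : Ω) : Set (Fin m × Ω) :=
  Set.range fun i : Fin m => ((i, ω) : Fin m × Ω)

/-! The permutations `γ_i`, `δ_j` only move copies of a point among themselves, so `φ(x)` and
`φ(y)` lie over `π(x)` and `π(y)` under the projection `𝒰 → Ω`, `(i, ω) ↦ ω`. Hence the
projection intertwines `φ` with `π`, and its fibres `B_ω` form a block system on which `H` acts
as `π(Δ(p,q,r))` acts on `Ω`. -/

lemma mem_Bset {m : ℕ} {Ω : Type} {ω : Ω} {z : Fin m × Ω} : z ∈ Bset m ω ↔ z.2 = ω :=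
  ⟨by rintro ⟨i, rfl⟩; rfl, fun h => ⟨z.1, by rw [← h]⟩⟩

lemma Bset_injective {m : ℕ} (hm : 0 < m) {Ω : Type} :
    Function.Injective (fun ω : Ω => Bset m ω) := fun ω ω' (h : Bset m ω = Bset m ω') =>
  mem_Bset.mp (show ((⟨0, hm⟩ : Fin m), ω) ∈ Bset m ω' from h ▸ mem_Bset.mpr rfl)

lemma disjoint_Bset {m : ℕ} {Ω : Type} {ω ω' : Ω} (h : ω ≠ ω') :
    Disjoint (Bset m ω) (Bset m ω') :=
  Set.disjoint_left.mpr fun _ hz hz' => h ((mem_Bset.mp hz).symm.trans (mem_Bset.mp hz'))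

lemma existsUnique_mem_Bset {m : ℕ} {Ω : Type} (z : Fin m × Ω) : ∃! ω : Ω, z ∈ Bset m ω :=
  ⟨z.2, mem_Bset.mpr rfl, fun _ h => (mem_Bset.mp h).symm⟩

lemma Bset_ne_empty {m : ℕ} (hm : 0 < m) {Ω : Type} (ω : Ω) : Bset m ω ≠ ∅ :=
  Set.nonempty_iff_ne_empty.mp ⟨(⟨0, hm⟩, ω), mem_Bset.mpr rfl⟩

lemma Bset_ne_univ {m : ℕ} (hm : 0 < m) {Ω : Type} {ω ω' : Ω} (h : ω' ≠ ω) :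
    Bset m ω ≠ Set.univ := fun hB =>
  h (mem_Bset.mp (hB ▸ Set.mem_univ _ : ((⟨0, hm⟩ : Fin m), ω') ∈ Bset m ω))

lemma image_Bset_of_snd_apply {m : ℕ} {Ω : Type} {f : Perm (Fin m × Ω)} {σ : Perm Ω}
    (hf : ∀ z, (f z).2 = σ z.2) (ω : Ω) : ⇑f '' Bset m ω = Bset m (σ ω) := by
  ext z
  rw [Equiv.image_eq_preimage_symm, Set.mem_preimage, mem_Bset, mem_Bset, ← σ.apply_eq_iff_eq,
    ← hf, Equiv.apply_symm_apply]

lemma prodCongrHom_apply_snd {ι Ω : Type} (σ : Perm Ω) (z : ι × Ω) :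
    (prodCongrHom ι Ω σ z).2 = σ z.2 := rfl

lemma extendDomain_fib_apply_snd {m : ℕ} {Ω : Type} [DecidableEq Ω] (σ : Perm (Fin m)) (e : Ω)
    (z : Fin m × Ω) : (σ.extendDomain (fib m Ω e) z).2 = z.2 := by
  by_cases h : z.2 = e
  · rw [Perm.extendDomain_apply_subtype σ (fib m Ω e) h, h]
    rfl
  · rw [Perm.extendDomain_apply_not_subtype σ (fib m Ω e) h]

lemma phiX2h_apply_snd (p q r deg m : ℕ) (π : Tri p q r →* Perm (Fin deg))
    (α β : Perm (Fin m)) (a b c d : Fin deg) (z : Fin m × Fin deg) :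
    (phiX2h p q r deg m π α β a b c d z).2 = π (gx p q r) z.2 := by
  simp only [phiX2h, Perm.mul_apply, prodCongrHom_apply_snd, extendDomain_fib_apply_snd]

lemma snd_apply_eq_of_closure_eq_top {G ι Ω : Type} [Group G] {s : Set G}
    (hs : Subgroup.closure s = ⊤) (φ : G →* Perm (ι × Ω)) (π : G →* Perm Ω)
    (h : ∀ g ∈ s, ∀ z, (φ g z).2 = π g z.2) (g : G) (z : ι × Ω) : (φ g z).2 = π g z.2 := by
  induction (hs ▸ Subgroup.mem_top g : g ∈ Subgroup.closure s) using Subgroup.closure_induction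
    generalizing z with
  | mem g hg => exact h g hg z
  | one => simp
  | mul g g' _ _ hg hg' => simp only [map_mul, Perm.mul_apply, hg, hg']
  | inv g _ hg =>
    rw [map_inv, map_inv, Perm.eq_inv_iff_eq, ← hg]
    exact congrArg Prod.snd ((φ g).apply_symm_apply z)

lemma snd_apply_of_phiX2h_phiY2h {p q r deg m : ℕ} {π : Tri p q r →* Perm (Fin deg)}
    {α β : Perm (Fin m)} {a b c d : Fin deg} {φ : Tri p q r →* Perm (Fin m × Fin deg)}
    (hφx : φ (gx p q r) = phiX2h p q r deg m π α β a b c d)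
    (hφy : φ (gy p q r) = phiY2h p q r deg m π) (g : Tri p q r) (z : Fin m × Fin deg) :
    (φ g z).2 = π g z.2 := by
  refine snd_apply_eq_of_closure_eq_top (PresentedGroup.closure_range_of _) φ π ?_ g z
  rintro _ ⟨i, rfl⟩ z
  fin_cases i
  · exact hφx ▸ phiX2h_apply_snd p q r deg m π α β a b c d z
  · exact hφy ▸ prodCongrHom_apply_snd _ z

theorem two_handle_blocks_imprimitive_general
    (p q r deg m : ℕ)
    (hm : 0 < m)
    (π : Tri p q r →* Equiv.Perm (Fin deg))
    (a b c d : Fin deg)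
    (α β : Equiv.Perm (Fin m))
    (φ : Tri p q r →* Equiv.Perm (Fin m × Fin deg))
    (hφx : φ (gx p q r) = phiX2h p q r deg m π α β a b c d)
    (hφy : φ (gy p q r) = phiY2h p q r deg m π)
    :
    Function.Injective (fun ω : Fin deg => Bset m ω) ∧
    (∀ (ω : Fin deg) (g : Tri p q r), ⇑(φ g) '' Bset m ω = Bset m (π g ω)) ∧
    (∀ (ω : Fin deg) (g : Tri p q r),
      ⇑(φ g) '' Bset m ω = Bset m ω ∨ Disjoint (⇑(φ g) '' Bset m ω) (Bset m ω)) ∧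
    (∀ u : Fin m × Fin deg, ∃! ω : Fin deg, u ∈ Bset m ω) ∧
    (1 < deg → ∀ ω : Fin deg, Bset m ω ≠ ∅ ∧ Bset m ω ≠ Set.univ) := by
  have image_Bset (ω : Fin deg) (g : Tri p q r) : ⇑(φ g) '' Bset m ω = Bset m (π g ω) :=
    image_Bset_of_snd_apply (snd_apply_of_phiX2h_phiY2h hφx hφy g) ω
  refine ⟨Bset_injective hm, image_Bset, fun ω g => ?_, existsUnique_mem_Bset,
    fun hdeg ω => ⟨Bset_ne_empty hm ω, ?_⟩⟩
  · rw [image_Bset]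
    by_cases h : π g ω = ω
    · exact .inl (by rw [h])
    · exact .inr (disjoint_Bset h)
  · obtain ⟨ω', hω'⟩ := Fintype.exists_ne_of_one_lt_card (by simpa using hdeg) ω
    exact Bset_ne_univ hm hω'

theorem two_handle_blocks_imprimitive
    (p q r k₀ deg m kk ll : ℕ) (hp : 0 < p) (hq : 0 < q) (hr : 0 < r)
    (hk₀ : 0 < k₀) (hm : 0 < m)
    (π : Tri p q r →* Equiv.Perm (Fin deg))
    (htrans : ∀ z z' : Fin deg, ∃ g : Tri p q r, π g z = z')
    (a b c d : Fin deg)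
    (hab : a ≠ b) (hac : a ≠ c) (had : a ≠ d) (hbc : b ≠ c) (hbd : b ≠ d) (hcd : c ≠ d)
    (hax : π (gx p q r) a = a) (hbx : π (gx p q r) b = b)
    (hcx : π (gx p q r) c = c) (hdx : π (gx p q r) d = d)
    (hhandle_ab : ((π (gx p q r * gy p q r)) ^ k₀) a = b)
    (hhandle_cd : ((π (gx p q r * gy p q r)) ^ k₀) c = d)
    (horb_ac : ∀ n : ℤ, ((π (gx p q r * gy p q r)) ^ n) a ≠ c)
    (horb_ad : ∀ n : ℤ, ((π (gx p q r * gy p q r)) ^ n) a ≠ d)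
    (horb_ca : ∀ n : ℤ, ((π (gx p q r * gy p q r)) ^ n) c ≠ a)
    (horb_cb : ∀ n : ℤ, ((π (gx p q r * gy p q r)) ^ n) c ≠ b)
    (hk₀a : k₀ < Nat.card {w : Fin deg | ∃ n : ℤ, ((π (gx p q r * gy p q r)) ^ n) a = w})
    (hk₀c : k₀ < Nat.card {w : Fin deg | ∃ n : ℤ, ((π (gx p q r * gy p q r)) ^ n) c = w})
    (α β : Equiv.Perm (Fin m))
    (hα : α.cycleType = Multiset.replicate kk p)
    (hβ : β.cycleType = Multiset.replicate ll p)
    (hαβ : ∀ j j' : Fin m, ∃ g ∈ Subgroup.closure {α, β}, g j = j')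
    (φ : Tri p q r →* Equiv.Perm (Fin m × Fin deg))
    (hφx : φ (gx p q r) = phiX2h p q r deg m π α β a b c d)
    (hφy : φ (gy p q r) = phiY2h p q r deg m π)
    :
    Function.Injective (fun ω : Fin deg => Bset m ω) ∧
    (∀ (ω : Fin deg) (g : Tri p q r), ⇑(φ g) '' Bset m ω = Bset m (π g ω)) ∧
    (∀ (ω : Fin deg) (g : Tri p q r),
      ⇑(φ g) '' Bset m ω = Bset m ω ∨ Disjoint (⇑(φ g) '' Bset m ω) (Bset m ω)) ∧
    (∀ u : Fin m × Fin deg, ∃! ω : Fin deg, u ∈ Bset m ω) ∧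
    (1 < deg → ∀ ω : Fin deg, Bset m ω ≠ ∅ ∧ Bset m ω ≠ Set.univ) :=
  two_handle_blocks_imprimitive_general p q r deg m hm π a b c d α β φ hφx hφy
end

section
/- In the two-handle construction, let J ≤ H be the setwise stabiliser of the block B_a = {a, deg+a, …, (m−1)deg+a} and let Q ≤ Sym(B_a) be the image of the restriction homomorphism J → Sym(B_a). Identifying B_a with {1,…,m} via a+(ℓ−1)deg ↦ ℓ, we have Q = ⟨α, β⟩. -/
open Equiv Pointwise

/-!
Every element of `Δ(p,q,r)` acts on `Fin m × Ω` as a skew product over `π` whose fibre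
permutations lie in `⟨α, β⟩`, since both generators do; hence `Q ≤ ⟨α, β⟩`.
Conversely `φ_x` induces `α` on `B_a` and `β` on `B_c`. Away from `a, b, c, d` the element
`φ_x` carries each block to a block without permuting the copies, and `φ_y` never permutes
them, so transitivity of `π` gives some `g` carrying `B_a` onto `B_c` copy by copy;
conjugating `x` by `g` induces `β` on `B_a`.
-/

section Fibres

variable {G : Type*} [Group G] {ι Ω : Type}

def MapsFibre (f : Perm (ι × Ω)) (ω : Ω) (u : Perm ι) (ω' : Ω) : Prop :=
  ∀ j, f (j, ω) = (u j, ω')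

namespace MapsFibre

variable {f f' : Perm (ι × Ω)} {ω ω' ω'' : Ω} {u u' v : Perm ι}

theorem one (ω : Ω) : MapsFibre (1 : Perm (ι × Ω)) ω 1 ω := fun _ => rfl

theorem mul (h' : MapsFibre f' ω' u' ω'') (h : MapsFibre f ω u ω') :
    MapsFibre (f' * f) ω (u' * u) ω'' := fun j => by
  rw [Perm.mul_apply, h j, h' (u j), Perm.mul_apply]

theorem inv (h : MapsFibre f ω u ω') : MapsFibre f⁻¹ ω' u⁻¹ ω := fun j => by
  rw [Perm.inv_eq_iff_eq, h]
  simp only [Perm.coe_inv, Equiv.apply_symm_apply]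

theorem perm_eq (h : MapsFibre f ω u ω') (h' : MapsFibre f ω v ω'') : u = v :=
  Equiv.ext fun j => congrArg Prod.fst ((h j).symm.trans (h' j))

end MapsFibre

theorem mapsFibre_prodCongrHom (σ : Perm Ω) (ω : Ω) :
    MapsFibre (prodCongrHom ι Ω σ) ω 1 (σ ω) := fun _ => rfl

/-- The permutational wreath product `S ≀ Sym Ω`, paired with its projection to `Sym Ω`. -/
def skewSubgroup (ι : Type) (S : Subgroup (Perm ι)) : Subgroup (Perm Ω × Perm (ι × Ω)) where
  carrier := {τf | ∀ ω, ∃ u ∈ S, MapsFibre τf.2 ω u (τf.1 ω)}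
  mul_mem' {τf τf'} h h' ω := by
    obtain ⟨u', hu', hf'⟩ := h' ω
    obtain ⟨u, hu, hf⟩ := h (τf'.1 ω)
    exact ⟨u * u', S.mul_mem hu hu', hf.mul hf'⟩
  one_mem' ω := ⟨1, S.one_mem, MapsFibre.one ω⟩
  inv_mem' {τf} h ω := by
    obtain ⟨u, hu, hf⟩ := h (τf.1⁻¹ ω)
    simp only [Perm.coe_inv, Equiv.apply_symm_apply] at hf
    exact ⟨u⁻¹, S.inv_mem hu, hf.inv⟩

theorem prodCongrHom_mem_skewSubgroup (S : Subgroup (Perm ι)) (σ : Perm Ω) :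
    (σ, prodCongrHom ι Ω σ) ∈ skewSubgroup ι S :=
  fun ω => ⟨1, S.one_mem, mapsFibre_prodCongrHom σ ω⟩

/-- The group `Q` induced on the block `ι × {ω}` by its setwise stabiliser. -/
def fibreGroup (φ : G →* Perm (ι × Ω)) (ω : Ω) : Subgroup (Perm ι) where
  carrier := {σ | ∃ g, MapsFibre (φ g) ω σ ω}
  mul_mem' := by
    rintro σ τ ⟨g, hg⟩ ⟨h, hh⟩
    exact ⟨g * h, by rw [map_mul]; exact hg.mul hh⟩
  one_mem' := ⟨1, by rw [map_one]; exact MapsFibre.one ω⟩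
  inv_mem' := by
    rintro σ ⟨g, hg⟩
    exact ⟨g⁻¹, by rw [map_inv]; exact hg.inv⟩

theorem fibreGroup_le_of_forall_mem_skewSubgroup {S : Subgroup (Perm ι)} {π : G →* Perm Ω}
    {φ : G →* Perm (ι × Ω)} (h : ∀ g, (π g, φ g) ∈ skewSubgroup ι S) (ω : Ω) :
    fibreGroup φ ω ≤ S := by
  rintro σ ⟨g, hg⟩
  obtain ⟨u, hu, hgu⟩ := h g ω
  rwa [hg.perm_eq hgu]

def untwistedSetoid (φ : G →* Perm (ι × Ω)) : Setoid Ω where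
  r ω ω' := ∃ g, MapsFibre (φ g) ω 1 ω'
  iseqv :=
    { refl := fun ω => ⟨1, by rw [map_one]; exact MapsFibre.one ω⟩
      symm := fun ⟨g, hg⟩ => ⟨g⁻¹, by rw [map_inv, ← inv_one]; exact hg.inv⟩
      trans := fun ⟨g, hg⟩ ⟨h, hh⟩ => ⟨h * g, by rw [map_mul, ← one_mul 1]; exact hh.mul hg⟩ }

theorem fibreGroup_le_of_untwistedSetoid {φ : G →* Perm (ι × Ω)} {ω ω' : Ω}
    (h : untwistedSetoid φ ω ω') : fibreGroup φ ω' ≤ fibreGroup φ ω := by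
  obtain ⟨g, hg⟩ := h
  rintro σ ⟨s, hs⟩
  refine ⟨g⁻¹ * s * g, ?_⟩
  simpa only [map_mul, map_inv, inv_one, one_mul, mul_one] using (hg.inv.mul hs).mul hg

def classPreservingSubgroup (π : G →* Perm Ω) (r : Setoid Ω) : Subgroup G where
  carrier := {g | ∀ ω, r ω (π g ω)}
  mul_mem' {g h} hg hh ω := by
    rw [map_mul]
    exact r.iseqv.trans (hh ω) (hg (π h ω))
  one_mem' ω := by
    rw [map_one]
    exact r.iseqv.refl ω
  inv_mem' {g} hg ω := r.iseqv.symm (by simpa using hg (π g⁻¹ ω))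

end Fibres

section TwoHandle

variable {p q r deg m : ℕ} {π : Tri p q r →* Perm (Fin deg)} {α β : Perm (Fin m)}
  {a b c d : Fin deg}

theorem Tri.mem_of_gx_mem_of_gy_mem {K : Subgroup (Tri p q r)} (hx : gx p q r ∈ K)
    (hy : gy p q r ∈ K) (g : Tri p q r) : g ∈ K := by
  have hgen : Set.range (PresentedGroup.of : Fin 2 → Tri p q r) = {gx p q r, gy p q r} := by
    ext z
    simp [Fin.exists_fin_two, gx, gy, eq_comm]
  have hclosure := PresentedGroup.closure_range_of (triRels p q r)
  rw [hgen] at hclosure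
  exact (Subgroup.closure_le K).2 (Set.pair_subset hx hy) (hclosure ▸ Subgroup.mem_top g)

theorem mapsFibre_extendDomain_fib_self (γ : Perm (Fin m)) (e : Fin deg) :
    MapsFibre (γ.extendDomain (fib m (Fin deg) e)) e γ e :=
  fun j => Perm.extendDomain_apply_image γ (fib m (Fin deg) e) j

theorem mapsFibre_extendDomain_fib_of_ne (γ : Perm (Fin m)) {ω e : Fin deg} (h : ω ≠ e) :
    MapsFibre (γ.extendDomain (fib m (Fin deg) e)) ω 1 ω :=
  fun _ => Perm.extendDomain_apply_not_subtype _ _ h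

theorem extendDomain_fib_mem_skewSubgroup {S : Subgroup (Perm (Fin m))} {γ : Perm (Fin m)}
    (hγ : γ ∈ S) (e : Fin deg) : (1, γ.extendDomain (fib m (Fin deg) e)) ∈ skewSubgroup (Fin m) S := by
  intro ω
  by_cases h : ω = e
  · subst h
    exact ⟨γ, hγ, mapsFibre_extendDomain_fib_self γ ω⟩
  · exact ⟨1, S.one_mem, mapsFibre_extendDomain_fib_of_ne γ h⟩

theorem mapsFibre_phiX2h {ω : Fin deg} {ua ub uc ud : Perm (Fin m)}
    (ha : MapsFibre (α.extendDomain (fib m (Fin deg) a)) ω ua ω)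
    (hb : MapsFibre (α⁻¹.extendDomain (fib m (Fin deg) b)) ω ub ω)
    (hc : MapsFibre (β.extendDomain (fib m (Fin deg) c)) ω uc ω)
    (hd : MapsFibre (β⁻¹.extendDomain (fib m (Fin deg) d)) ω ud ω) :
    MapsFibre (phiX2h p q r deg m π α β a b c d) ω (ua * ub * uc * ud) (π (gx p q r) ω) := by
  unfold phiX2h
  simpa only [one_mul] using ((((mapsFibre_prodCongrHom _ ω).mul ha).mul hb).mul hc).mul hd

theorem phiX2h_mem_skewSubgroup {S : Subgroup (Perm (Fin m))} (hα : α ∈ S) (hβ : β ∈ S) :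
    (π (gx p q r), phiX2h p q r deg m π α β a b c d) ∈ skewSubgroup (Fin m) S := by
  intro ω
  obtain ⟨ua, hua, ha⟩ := extendDomain_fib_mem_skewSubgroup hα a ω
  obtain ⟨ub, hub, hb⟩ := extendDomain_fib_mem_skewSubgroup (S.inv_mem hα) b ω
  obtain ⟨uc, huc, hc⟩ := extendDomain_fib_mem_skewSubgroup hβ c ω
  obtain ⟨ud, hud, hd⟩ := extendDomain_fib_mem_skewSubgroup (S.inv_mem hβ) d ω
  exact ⟨_, S.mul_mem (S.mul_mem (S.mul_mem hua hub) huc) hud, mapsFibre_phiX2h ha hb hc hd⟩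

theorem mapsFibre_phiX2h_a (hab : a ≠ b) (hac : a ≠ c) (had : a ≠ d)
    (hax : π (gx p q r) a = a) : MapsFibre (phiX2h p q r deg m π α β a b c d) a α a := by
  simpa only [mul_one, hax] using mapsFibre_phiX2h (π := π) (mapsFibre_extendDomain_fib_self α a)
    (mapsFibre_extendDomain_fib_of_ne α⁻¹ hab) (mapsFibre_extendDomain_fib_of_ne β hac)
    (mapsFibre_extendDomain_fib_of_ne β⁻¹ had)

theorem mapsFibre_phiX2h_c (hac : a ≠ c) (hbc : b ≠ c) (hcd : c ≠ d)
    (hcx : π (gx p q r) c = c) : MapsFibre (phiX2h p q r deg m π α β a b c d) c β c := by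
  simpa only [mul_one, one_mul, hcx] using mapsFibre_phiX2h (π := π)
    (mapsFibre_extendDomain_fib_of_ne α hac.symm) (mapsFibre_extendDomain_fib_of_ne α⁻¹ hbc.symm)
    (mapsFibre_extendDomain_fib_self β c) (mapsFibre_extendDomain_fib_of_ne β⁻¹ hcd)

theorem mapsFibre_phiX2h_of_ne {ω : Fin deg} (ha : ω ≠ a) (hb : ω ≠ b) (hc : ω ≠ c)
    (hd : ω ≠ d) :
    MapsFibre (phiX2h p q r deg m π α β a b c d) ω 1 (π (gx p q r) ω) := by
  simpa only [mul_one] using mapsFibre_phiX2h (mapsFibre_extendDomain_fib_of_ne α ha)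
    (mapsFibre_extendDomain_fib_of_ne α⁻¹ hb) (mapsFibre_extendDomain_fib_of_ne β hc)
    (mapsFibre_extendDomain_fib_of_ne β⁻¹ hd)

theorem gx_mem_classPreservingSubgroup {φ : Tri p q r →* Perm (Fin m × Fin deg)}
    (hφx : φ (gx p q r) = phiX2h p q r deg m π α β a b c d)
    (hax : π (gx p q r) a = a) (hbx : π (gx p q r) b = b)
    (hcx : π (gx p q r) c = c) (hdx : π (gx p q r) d = d) :
    gx p q r ∈ classPreservingSubgroup π (untwistedSetoid φ) := by
  intro ω
  by_cases hfix : π (gx p q r) ω = ω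
  · rw [hfix]
  · have hne (e : Fin deg) (he : π (gx p q r) e = e) : ω ≠ e := fun h => hfix (h ▸ he)
    exact ⟨gx p q r, hφx ▸ mapsFibre_phiX2h_of_ne (hne a hax) (hne b hbx) (hne c hcx) (hne d hdx)⟩

theorem gy_mem_classPreservingSubgroup {φ : Tri p q r →* Perm (Fin m × Fin deg)}
    (hφy : φ (gy p q r) = phiY2h p q r deg m π) :
    gy p q r ∈ classPreservingSubgroup π (untwistedSetoid φ) :=
  fun ω => ⟨gy p q r, hφy ▸ mapsFibre_prodCongrHom _ ω⟩

end TwoHandle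

theorem two_handle_block_stabiliser_action_general
    (p q r deg m : ℕ)
    (π : Tri p q r →* Equiv.Perm (Fin deg))
    (htrans : ∀ z z' : Fin deg, ∃ g : Tri p q r, π g z = z')
    (a b c d : Fin deg)
    (hab : a ≠ b) (hac : a ≠ c) (had : a ≠ d) (hbc : b ≠ c) (hcd : c ≠ d)
    (hax : π (gx p q r) a = a) (hbx : π (gx p q r) b = b)
    (hcx : π (gx p q r) c = c) (hdx : π (gx p q r) d = d)
    (α β : Equiv.Perm (Fin m))
    (φ : Tri p q r →* Equiv.Perm (Fin m × Fin deg))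
    (hφx : φ (gx p q r) = phiX2h p q r deg m π α β a b c d)
    (hφy : φ (gy p q r) = phiY2h p q r deg m π)
    :
    {σ : Equiv.Perm (Fin m) | ∃ g : Tri p q r, ∀ j : Fin m, φ g (j, a) = (σ j, a)} =
      ↑(Subgroup.closure {α, β}) := by
  have hαS : α ∈ Subgroup.closure {α, β} := Subgroup.subset_closure (Set.mem_insert α _)
  have hβS : β ∈ Subgroup.closure {α, β} := Subgroup.subset_closure (Set.mem_insert_of_mem α rfl)
  have hskew (g : Tri p q r) : (π g, φ g) ∈ skewSubgroup (Fin m) (Subgroup.closure {α, β}) :=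
    Tri.mem_of_gx_mem_of_gy_mem (K := (skewSubgroup _ _).comap (π.prod φ))
      (by rw [Subgroup.mem_comap, MonoidHom.prod_apply, hφx]
          exact phiX2h_mem_skewSubgroup hαS hβS)
      (by rw [Subgroup.mem_comap, MonoidHom.prod_apply, hφy]
          exact prodCongrHom_mem_skewSubgroup _ _) g
  obtain ⟨g, hg⟩ := htrans a c
  have hac' : untwistedSetoid φ a c := hg ▸ Tri.mem_of_gx_mem_of_gy_mem
    (gx_mem_classPreservingSubgroup hφx hax hbx hcx hdx) (gy_mem_classPreservingSubgroup hφy) g a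
  change (fibreGroup φ a : Set (Equiv.Perm (Fin m))) = _
  refine congrArg _ (le_antisymm (fibreGroup_le_of_forall_mem_skewSubgroup hskew a) ?_)
  rw [Subgroup.closure_le]
  rintro _ (rfl | rfl)
  · exact ⟨gx p q r, hφx ▸ mapsFibre_phiX2h_a hab hac had hax⟩
  · exact fibreGroup_le_of_untwistedSetoid hac' ⟨gx p q r, hφx ▸ mapsFibre_phiX2h_c hac hbc hcd hcx⟩

theorem two_handle_block_stabiliser_action
    (p q r k₀ deg m kk ll : ℕ) (hp : 0 < p) (hq : 0 < q) (hr : 0 < r)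
    (hk₀ : 0 < k₀) (hm : 0 < m)
    (π : Tri p q r →* Equiv.Perm (Fin deg))
    (htrans : ∀ z z' : Fin deg, ∃ g : Tri p q r, π g z = z')
    (a b c d : Fin deg)
    (hab : a ≠ b) (hac : a ≠ c) (had : a ≠ d) (hbc : b ≠ c) (hbd : b ≠ d) (hcd : c ≠ d)
    (hax : π (gx p q r) a = a) (hbx : π (gx p q r) b = b)
    (hcx : π (gx p q r) c = c) (hdx : π (gx p q r) d = d)
    (hhandle_ab : ((π (gx p q r * gy p q r)) ^ k₀) a = b)
    (hhandle_cd : ((π (gx p q r * gy p q r)) ^ k₀) c = d)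
    (horb_ac : ∀ n : ℤ, ((π (gx p q r * gy p q r)) ^ n) a ≠ c)
    (horb_ad : ∀ n : ℤ, ((π (gx p q r * gy p q r)) ^ n) a ≠ d)
    (horb_ca : ∀ n : ℤ, ((π (gx p q r * gy p q r)) ^ n) c ≠ a)
    (horb_cb : ∀ n : ℤ, ((π (gx p q r * gy p q r)) ^ n) c ≠ b)
    (hk₀a : k₀ < Nat.card {w : Fin deg | ∃ n : ℤ, ((π (gx p q r * gy p q r)) ^ n) a = w})
    (hk₀c : k₀ < Nat.card {w : Fin deg | ∃ n : ℤ, ((π (gx p q r * gy p q r)) ^ n) c = w})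
    (α β : Equiv.Perm (Fin m))
    (hα : α.cycleType = Multiset.replicate kk p)
    (hβ : β.cycleType = Multiset.replicate ll p)
    (hαβ : ∀ j j' : Fin m, ∃ g ∈ Subgroup.closure {α, β}, g j = j')
    (φ : Tri p q r →* Equiv.Perm (Fin m × Fin deg))
    (hφx : φ (gx p q r) = phiX2h p q r deg m π α β a b c d)
    (hφy : φ (gy p q r) = phiY2h p q r deg m π)
    :
    {σ : Equiv.Perm (Fin m) | ∃ g : Tri p q r, ∀ j : Fin m, φ g (j, a) = (σ j, a)} =
      ↑(Subgroup.closure {α, β}) :=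
  two_handle_block_stabiliser_action_general p q r deg m π htrans a b c d hab hac had hbc hcd hax
    hbx hcx hdx α β φ hφx hφy
end
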